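/- If a set HC of Horn clauses has a closed abstract reachability graph (S,E) with respect to a predicate map Π, then HC is syntactically solvable; a solution is obtained by mapping each relation symbol p to the disjunction ⋁_{(p,Q)∈S} ⋀Q. -/
import Mathlib


namespace Stmt16

/- Horn clauses over a constraint language.
`S` indexes the class of structures, `U s` is the universe of structure `s`,
`V` is the set of first-order variables, `Con` the constraints (interpreted
by `interp`), `Tm` the first-order terms (evaluated by `tval`), `R` the
uninterpreted relation symbols with arities `arity`, and `xvar p` the fixed
vector of argument variables of the relation symbol `p`. -/
variable {S V Con Tm R : Type} (U : S → Type)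
  (interp : Con → (s : S) → (V → U s) → Prop)
  (tval : Tm → (s : S) → (V → U s) → U s)
  (arity : R → ℕ) (xvar : (p : R) → Fin (arity p) → V)

/-- An application p(t₁,…,tₖ) of a relation symbol to terms. -/
structure HAtom (arity : R → ℕ) (Tm : Type) : Type where
  rel : R
  args : Fin (arity rel) → Tm

/-- A Horn clause C ∧ B₁ ∧ … ∧ Bₙ → H; `head = none` encodes head `false`. -/
structure Clause (Con : Type) (arity : R → ℕ) (Tm : Type) : Type where
  c : Con
  body : List (HAtom arity Tm)
  head : Option (HAtom arity Tm)

/-- Interpretation of the relation symbols in a structure s. -/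
def RelInterp (s : S) : Type _ := ∀ p : R, (Fin (arity p) → U s) → Prop

/-- A clause holds in structure s under relation interpretation ρ. -/
def ClauseHoldsSem (s : S) (ρ : RelInterp U arity s) (cl : Clause Con arity Tm) : Prop :=
  ∀ α : V → U s,
    interp cl.c s α →
    (∀ b ∈ cl.body, ρ b.rel fun i => tval (b.args i) s α) →
    (match cl.head with
      | none => False
      | some a => ρ a.rel fun i => tval (a.args i) s α)

/-- Semantic solvability: in every structure of the class there exist
relations making all clauses true. -/
def SemSolvable (HC : List (Clause Con arity Tm)) : Prop :=
  ∀ s : S, ∃ ρ : RelInterp U arity s, ∀ cl ∈ HC, ClauseHoldsSem U interp tval arity s ρ cl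

open Classical in
/-- The assignment obtained from α by overriding the argument variables
of the relation symbol of `a` with the values of the argument terms
(semantic substitution sol(p)[t̄]). -/
noncomputable def override (s : S) (α : V → U s) (a : HAtom arity Tm) : V → U s :=
  fun v => if h : ∃ i, xvar a.rel i = v then tval (a.args (Classical.choose h)) s α else α v

/-- Instantiation sol(p)[t̄] of a relation symbol assignment at an atom. -/
def instA (sol : R → Con) (s : S) (α : V → U s) (a : HAtom arity Tm) : Prop :=
  interp (sol a.rel) s (override U tval arity xvar s α a)

/-- The instantiation sol(h) of a clause h is universally valid. -/
def ClauseHoldsSyn (sol : R → Con) (cl : Clause Con arity Tm) : Prop :=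
  ∀ (s : S) (α : V → U s),
    interp cl.c s α →
    (∀ b ∈ cl.body, instA U interp tval arity xvar sol s α b) →
    (match cl.head with
      | none => False
      | some a => instA U interp tval arity xvar sol s α a)

/-- sol(p) is a constraint "in the n free variables x̄_p": its interpretation
depends only on the designated argument variables. -/
def GoodSol (sol : R → Con) : Prop :=
  ∀ p : R, ∀ (s : S) (α β : V → U s),
    (∀ i, α (xvar p i) = β (xvar p i)) → (interp (sol p) s α ↔ interp (sol p) s β)

/-- Syntactic solvability: there is an assignment of constraints to relation
symbols validating (the universal closure of) every instantiated clause in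
every structure. -/
def SynSolvable (HC : List (Clause Con arity Tm)) : Prop :=
  ∃ sol : R → Con, GoodSol U interp arity xvar sol ∧
    ∀ cl ∈ HC, ClauseHoldsSyn U interp tval arity xvar sol cl
/-! ### Abstract reachability graphs (ARGs) -/

/-- Nodes of an ARG: a relation symbol together with a set of predicates. -/
abbrev Node (R : Type) (Con : Type) : Type := R × Finset Con

/-- Instantiation φ[t̄] of a predicate φ (over the argument variables x̄_p)
at the argument terms of the atom a. -/
def instC (q : Con) (a : HAtom arity Tm) (s : S) (α : V → U s) : Prop :=
  interp q s (override U tval arity xvar s α a)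

/-- C ∧ Q₁[t̄₁] ∧ … ∧ Qₙ[t̄ₙ]: the body of clause cl holds under the node
sequence ss, structure s and assignment α. -/
def BodyHolds (cl : Clause Con arity Tm) (ss : List (Node R Con))
    (s : S) (α : V → U s) : Prop :=
  interp cl.c s α ∧
  ∀ pr ∈ cl.body.zip ss, ∀ q ∈ pr.2.2, instC U interp tval arity xvar q pr.1 s α

/-- Q is exactly the set of predicates of Preds(p) entailed by the instantiated
body: Q = {φ ∈ Preds(p) | C ∧ Q₁[t̄₁] ∧ … ∧ Qₙ[t̄ₙ] ⊨ φ[t̄]}. -/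
def EntailedQ (Preds : R → Finset Con) (cl : Clause Con arity Tm)
    (ss : List (Node R Con)) (a : HAtom arity Tm) (Q : Finset Con) : Prop :=
  ∀ φ : Con, φ ∈ Q ↔ (φ ∈ Preds a.rel ∧
    ∀ (s : S) (α : V → U s), BodyHolds U interp tval arity xvar cl ss s α →
      instC U interp tval arity xvar φ a s α)

/-- (SS, E) is an ARG for HC over the predicate map Π: nodes are pairs (p, Q)
with Q ⊆ Preds(p), and every hyperedge is labelled by a clause of HC, matches the
body relation symbols, and its target carries exactly the entailed
predicates. -/
def IsARG (HC : List (Clause Con arity Tm)) (Preds : R → Finset Con)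
    (SS : Set (Node R Con))
    (E : List (Node R Con) → Clause Con arity Tm → Node R Con → Prop) : Prop :=
  (∀ n ∈ SS, n.2 ⊆ Preds n.1) ∧
  ∀ ss h t, E ss h t →
    h ∈ HC ∧ ss.length = h.body.length ∧ (∀ n ∈ ss, n ∈ SS) ∧
    (∀ pr ∈ h.body.zip ss, pr.1.rel = pr.2.1) ∧
    ∃ a, h.head = some a ∧ t.1 = a.rel ∧ t ∈ SS ∧
      EntailedQ U interp tval arity xvar Preds h ss a t.2

/-- The ARG is closed: for every clause of HC and every matching sequence of
nodes, either the instantiated body is unsatisfiable, or (for clauses with a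
relation symbol head) a corresponding hyperedge with the prescribed target
exists. -/
def ClosedARG (HC : List (Clause Con arity Tm)) (Preds : R → Finset Con)
    (SS : Set (Node R Con))
    (E : List (Node R Con) → Clause Con arity Tm → Node R Con → Prop) : Prop :=
  ∀ h ∈ HC, ∀ ss : List (Node R Con),
    ss.length = h.body.length → (∀ n ∈ ss, n ∈ SS) →
    (∀ pr ∈ h.body.zip ss, pr.1.rel = pr.2.1) →
    ((∀ (s : S) (α : V → U s), ¬ BodyHolds U interp tval arity xvar h ss s α) ∨
      ∃ a, h.head = some a ∧ ∃ t, E ss h t ∧ t.1 = a.rel ∧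
        EntailedQ U interp tval arity xvar Preds h ss a t.2)

/-- Lemma 2, "⇐": if HC has a closed ARG (SS, E) w.r.t. a
predicate map Π, then HC is syntactically solvable; a solution is obtained
by mapping each relation symbol p to the disjunction ⋁_{(p,Q)∈SS} ⋀Q. -/
theorem stmt16 (HC : List (Clause Con arity Tm)) (Preds : R → Finset Con)
    (hPredsGood : ∀ p : R, ∀ q ∈ Preds p, ∀ (s : S) (α β : V → U s),
        (∀ i, α (xvar p i) = β (xvar p i)) → (interp q s α ↔ interp q s β))
    (SS : Set (Node R Con))
    (E : List (Node R Con) → Clause Con arity Tm → Node R Con → Prop)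
    (harg : IsARG U interp tval arity xvar HC Preds SS E)
    (hclosed : ClosedARG U interp tval arity xvar HC Preds SS E)
    (sol : R → Con)
    (hsol : ∀ (p : R) (s : S) (α : V → U s),
        interp (sol p) s α ↔ ∃ Q : Finset Con, (p, Q) ∈ SS ∧ ∀ q ∈ Q, interp q s α) :
    (GoodSol U interp arity xvar sol ∧
      ∀ cl ∈ HC, ClauseHoldsSyn U interp tval arity xvar sol cl) ∧
    SynSolvable U interp tval arity xvar HC := by
  classical
  have hmain : GoodSol U interp arity xvar sol ∧
      ∀ cl ∈ HC, ClauseHoldsSyn U interp tval arity xvar sol cl := by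
    constructor
    · intro p s α β hab
      rw [hsol, hsol]
      constructor <;> rintro ⟨Q, hQ, hq⟩
      · exact ⟨Q, hQ, fun q hqQ =>
          (hPredsGood p q (harg.1 (p, Q) hQ hqQ) s α β hab).mp (hq q hqQ)⟩
      · exact ⟨Q, hQ, fun q hqQ =>
          (hPredsGood p q (harg.1 (p, Q) hQ hqQ) s α β hab).mpr (hq q hqQ)⟩
    · intro cl hcl s α hc hbody
      set f : HAtom arity Tm → Node R Con := fun b =>
        (b.rel, if h : ∃ Q : Finset Con, (b.rel, Q) ∈ SS ∧
            ∀ q ∈ Q, interp q s (override U tval arity xvar s α b)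
          then h.choose else ∅) with hf
      have hfb : ∀ b ∈ cl.body, (b.rel, (f b).2) ∈ SS ∧
          ∀ q ∈ (f b).2, interp q s (override U tval arity xvar s α b) := by
        intro b hb
        have h1 : ∃ Q : Finset Con, (b.rel, Q) ∈ SS ∧
            ∀ q ∈ Q, interp q s (override U tval arity xvar s α b) :=
          (hsol b.rel s _).mp (hbody b hb)
        simp only [hf, dif_pos h1]
        exact h1.choose_spec
      set ss := cl.body.map f with hss
      have hzip : cl.body.zip ss = cl.body.map fun b => (b, f b) := by
        conv_lhs => rw [← List.map_id cl.body]
        rw [hss, List.zip_map']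
        simp
      have hlen : ss.length = cl.body.length := by simp [hss]
      have hSS : ∀ n ∈ ss, n ∈ SS := by
        intro n hn
        rw [hss, List.mem_map] at hn
        obtain ⟨b, hb, rfl⟩ := hn
        have := (hfb b hb).1
        simpa only [hf] using this
      have hrel : ∀ pr ∈ cl.body.zip ss, pr.1.rel = pr.2.1 := by
        intro pr hpr
        rw [hzip, List.mem_map] at hpr
        obtain ⟨b, hb, rfl⟩ := hpr
        rfl
      have hBH : BodyHolds U interp tval arity xvar cl ss s α := by
        refine ⟨hc, ?_⟩
        intro pr hpr q hq
        rw [hzip, List.mem_map] at hpr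
        obtain ⟨b, hb, rfl⟩ := hpr
        exact (hfb b hb).2 q hq
      rcases hclosed cl hcl ss hlen hSS hrel with hleft | ⟨a, hhead, t, hE, ht1, hEQ⟩
      · exact absurd hBH (hleft s α)
      · obtain ⟨_, _, _, _, a', ha', ht1', htSS, _⟩ := (harg.2 ss cl t hE)
        rw [hhead]
        show interp (sol a.rel) s (override U tval arity xvar s α a)
        rw [hsol]
        refine ⟨t.2, ?_, ?_⟩
        · have ht : t = (a.rel, t.2) := by rw [← ht1]
          exact ht ▸ htSS
        · intro q hq
          exact ((hEQ q).mp hq).2 s α hBH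
  exact ⟨hmain, sol, hmain⟩

end Stmt16
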